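/- arXiv:2212.00241 — 3 statements merged into one kernel-verified Lean document; each statement's English description precedes it below -/
import Mathlib

section
/- Let N, M ≥ 1, let Θ ∈ ℂ^{M×M} be Hermitian positive semidefinite, let D̂ ∈ ℂ^{N×M}, let ε > 0, and let d be a real number. Then (D̂ + Δ) Θ (D̂ + Δ)^H − d·I_N ⪰ 0 holds for every Δ ∈ ℂ^{N×M} with Frobenius norm ‖Δ‖_F ≤ ε if and only if there exists a real number q ≥ 0 such that the block matrix [[D̂ Θ D̂^H − (q + d)·I_N, D̂ Θ], [Θ D̂^H, Θ + (q/ε²)·I_M]] is positive semidefinite. -/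
/-!
Both sides concern the Hermitian forms `A (x, y) = (Dᴴx + y)ᴴ Θ (Dᴴx + y) - d‖x‖²` and
`B (x, y) = ‖x‖² - ‖y‖² / ε²` on `ℂᴺ × ℂᴹ`. As `Δ` ranges over the Frobenius ball of radius `ε`,
`Δᴴx` ranges over all `y` with `‖y‖ ≤ ε‖x‖` (the rank-one `Δ = x yᴴ / ‖x‖²` attains each of them),
so robustness says that `B ≥ 0` implies `A ≥ 0`, while the block matrix of the LMI is the matrix
of `A - q B`. The S-lemma, applicable because `B (x, 0) > 0` for `x ≠ 0`, turns the implication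
into the existence of `q ≥ 0` with `A - q B ⪰ 0`.

The S-lemma rests on the convexity of the joint range `{(A v, B v)}` of two Hermitian forms on a
complex space: multiplying one summand by a suitable unit scalar makes the cross term of
`v + ζ w` parallel to the sum of the values at `v` and `w`, so the cone is closed under addition.
Separating it from the open quadrant `{A < 0 < B}` gives a functional whose coefficients yield `q`.
-/

open Matrix
open scoped ComplexOrder

/-- The Frobenius norm of a complex matrix. -/
noncomputable def frobeniusNorm {N M : ℕ} (Δ : Matrix (Fin N) (Fin M) ℂ) : ℝ :=
  Real.sqrt (∑ i, ∑ j, ‖Δ i j‖ ^ 2)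

theorem Complex.exists_norm_eq_one_re_mul_eq_zero (c : ℂ) :
    ∃ ζ : ℂ, ‖ζ‖ = 1 ∧ (ζ * c).re = 0 := by
  refine ⟨I * exp ((-arg c : ℝ) * I),
    by simp only [norm_mul, norm_I, norm_exp_ofReal_mul_I, one_mul], ?_⟩
  nth_rw 2 [← norm_mul_exp_arg_mul_I c]
  rw [show I * exp ((-arg c : ℝ) * I) * (‖c‖ * exp (arg c * I)) =
    I * ‖c‖ * exp ((-arg c : ℝ) * I + arg c * I) by rw [exp_add]; ring]
  simp

theorem Complex.exists_norm_eq_one_re_mul_parallel (a b : ℝ) (z w : ℂ) :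
    ∃ ζ : ℂ, ‖ζ‖ = 1 ∧ a * (ζ * w).re = b * (ζ * z).re ∧
      0 ≤ a * (ζ * z).re + b * (ζ * w).re := by
  obtain ⟨ζ, hζ, horth⟩ := exists_norm_eq_one_re_mul_eq_zero (a * w - b * z)
  have hpar : a * (ζ * w).re = b * (ζ * z).re := by
    have : (ζ * (a * w - b * z)).re = a * (ζ * w).re - b * (ζ * z).re := by
      simp only [mul_sub, sub_re, mul_left_comm ζ, re_ofReal_mul]
    linarith
  rcases le_total 0 (a * (ζ * z).re + b * (ζ * w).re) with h | h
  · exact ⟨ζ, hζ, hpar, h⟩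
  · refine ⟨-ζ, by simpa using hζ, ?_, ?_⟩ <;> simp only [neg_mul, neg_re] <;> linarith

theorem ContinuousLinearMap.apply_eq_fst_mul_add_snd_mul (f : ℝ × ℝ →L[ℝ] ℝ) (x : ℝ × ℝ) :
    f x = x.1 * f (1, 0) + x.2 * f (0, 1) := by
  calc f x = f (x.1 • (1, 0) + x.2 • (0, 1)) := by congr 1; ext <;> simp
    _ = x.1 * f (1, 0) + x.2 * f (0, 1) := by
      rw [map_add, map_smul, map_smul, smul_eq_mul, smul_eq_mul]

namespace Matrix

variable {m n : Type*} [Fintype n]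

noncomputable def quad (A : Matrix n n ℂ) (v : n → ℂ) : ℝ := (star v ⬝ᵥ A *ᵥ v).re

theorem posSemidef_iff_quad_nonneg {A : Matrix n n ℂ} (hA : A.IsHermitian) :
    A.PosSemidef ↔ ∀ v, 0 ≤ A.quad v := by
  simp only [posSemidef_iff_dotProduct_mulVec, Complex.nonneg_iff, quad, hA, true_and]
  exact forall_congr' fun v => and_iff_left (hA.im_star_dotProduct_mulVec_self v).symm

@[simp]
theorem quad_zero (A : Matrix n n ℂ) : A.quad 0 = 0 := by
  simp [quad]

theorem quad_sub (A B : Matrix n n ℂ) (v : n → ℂ) : (A - B).quad v = A.quad v - B.quad v := by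
  simp [quad, sub_mulVec]

theorem ofReal_smul_quad (c : ℝ) (A : Matrix n n ℂ) (v : n → ℂ) :
    ((c : ℂ) • A).quad v = c * A.quad v := by
  simp [quad, smul_mulVec]

theorem quad_ofReal_smul (A : Matrix n n ℂ) (c : ℝ) (v : n → ℂ) :
    A.quad ((c : ℂ) • v) = c ^ 2 * A.quad v := by
  simp only [quad, star_smul, mulVec_smul, smul_dotProduct, dotProduct_smul, smul_eq_mul,
    Complex.star_def, Complex.conj_ofReal]
  simp only [← mul_assoc, ← Complex.ofReal_mul, Complex.re_ofReal_mul]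
  ring

theorem quad_one [DecidableEq n] (v : n → ℂ) :
    (1 : Matrix n n ℂ).quad v = ‖WithLp.toLp 2 v‖ ^ 2 := by
  rw [← inner_self_eq_norm_sq (𝕜 := ℂ), EuclideanSpace.inner_toLp_toLp, quad, one_mulVec,
    dotProduct_comm]
  rfl

theorem quad_add_unit_smul {A : Matrix n n ℂ} (hA : A.IsHermitian) (v w : n → ℂ) {ζ : ℂ}
    (hζ : ‖ζ‖ = 1) :
    A.quad (v + ζ • w) = A.quad v + A.quad w + 2 * (ζ * (star v ⬝ᵥ A *ᵥ w)).re := by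
  have hcross : star w ⬝ᵥ A *ᵥ v = star (star v ⬝ᵥ A *ᵥ w) := by
    rw [eq_comm, star_dotProduct, star_star, star_mulVec, hA.eq, dotProduct_mulVec]
  have hζζ : ζ * star ζ = 1 := by
    rw [Complex.star_def, Complex.mul_conj', hζ]
    simp
  simp only [quad, star_add, star_smul, mulVec_add, mulVec_smul, dotProduct_add, add_dotProduct,
    smul_dotProduct, dotProduct_smul, smul_eq_mul, hcross]
  rw [← star_mul', mul_add, ← mul_assoc, hζζ, one_mul]
  simp only [Complex.add_re, Complex.star_def, Complex.conj_re]
  ring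

theorem quad_mul_mul_conjTranspose [Fintype m] (F : Matrix m n ℂ) (Θ : Matrix n n ℂ)
    (x : m → ℂ) : (F * Θ * Fᴴ).quad x = Θ.quad (Fᴴ *ᵥ x) := by
  rw [quad, quad, star_mulVec, conjTranspose_conjTranspose, Matrix.mul_assoc, ← mulVec_mulVec,
    dotProduct_mulVec (star x), mulVec_mulVec]

theorem quad_fromBlocks_zero_zero [Fintype m] (P : Matrix m m ℂ) (S : Matrix n n ℂ)
    (x : m → ℂ) (y : n → ℂ) :
    (fromBlocks P 0 0 S).quad (Sum.elim x y) = P.quad x + S.quad y := by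
  simp [quad, fromBlocks_mulVec, Function.star_sumElim, sumElim_dotProduct_sumElim]

def jointRange (A B : Matrix n n ℂ) : Set (ℝ × ℝ) := Set.range fun v => (A.quad v, B.quad v)

variable {A B : Matrix n n ℂ}

theorem smul_mem_jointRange {p : ℝ × ℝ} (hp : p ∈ jointRange A B) {c : ℝ} (hc : 0 ≤ c) :
    c • p ∈ jointRange A B := by
  obtain ⟨v, rfl⟩ := hp
  refine ⟨(Real.sqrt c : ℂ) • v, ?_⟩
  simp only [quad_ofReal_smul, Real.sq_sqrt hc, Prod.smul_mk, smul_eq_mul]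

theorem add_mem_jointRange (hA : A.IsHermitian) (hB : B.IsHermitian) {p r : ℝ × ℝ}
    (hp : p ∈ jointRange A B) (hr : r ∈ jointRange A B) : p + r ∈ jointRange A B := by
  obtain ⟨v, rfl⟩ := hp
  obtain ⟨w, rfl⟩ := hr
  set a := A.quad v + A.quad w
  set b := B.quad v + B.quad w
  rcases eq_or_ne (a ^ 2 + b ^ 2) 0 with hab | hab
  · refine ⟨0, ?_⟩
    simp only [quad_zero, Prod.mk_add_mk]
    ext <;> simp only <;> nlinarith [sq_nonneg a, sq_nonneg b]
  obtain ⟨ζ, hζ, hpar, hdir⟩ :=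
    Complex.exists_norm_eq_one_re_mul_parallel a b (star v ⬝ᵥ A *ᵥ w) (star v ⬝ᵥ B *ᵥ w)
  set x := (ζ * (star v ⬝ᵥ A *ᵥ w)).re
  set y := (ζ * (star v ⬝ᵥ B *ᵥ w)).re
  -- `(x, y) = μ • (a, b)`, so the forms at `v + ζ • w` take the value `(1 + 2 μ) • (a, b)`.
  set μ := (a * x + b * y) / (a ^ 2 + b ^ 2)
  have hμ : 0 ≤ μ := div_nonneg hdir (by positivity)
  have hμk : μ * (a ^ 2 + b ^ 2) = a * x + b * y := div_mul_cancel₀ _ hab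
  have hμ1 : 1 + 2 * μ ≠ 0 := by positivity
  refine ⟨(Real.sqrt (1 + 2 * μ)⁻¹ : ℂ) • (v + ζ • w), ?_⟩
  simp only [quad_ofReal_smul, quad_add_unit_smul hA _ _ hζ, quad_add_unit_smul hB _ _ hζ,
    Real.sq_sqrt (inv_nonneg.2 (by positivity : (0 : ℝ) ≤ 1 + 2 * μ)), Prod.mk_add_mk]
  congr 1
  · show (1 + 2 * μ)⁻¹ * (a + 2 * x) = a
    field_simp
    refine mul_right_cancel₀ hab ?_
    linear_combination (-2 * a) * hμk - 2 * b * hpar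
  · show (1 + 2 * μ)⁻¹ * (b + 2 * y) = b
    field_simp
    refine mul_right_cancel₀ hab ?_
    linear_combination (-2 * b) * hμk + 2 * a * hpar

theorem convex_jointRange (hA : A.IsHermitian) (hB : B.IsHermitian) :
    Convex ℝ (jointRange A B) :=
  fun _ hp _ hr _ _ ha hb _ =>
    add_mem_jointRange hA hB (smul_mem_jointRange hp ha) (smul_mem_jointRange hr hb)

theorem exists_nonneg_smul_quad_le_quad (hA : A.IsHermitian) (hB : B.IsHermitian)
    {v₀ : n → ℂ} (hv₀ : 0 < B.quad v₀) (h : ∀ v, 0 ≤ B.quad v → 0 ≤ A.quad v) :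
    ∃ q : ℝ, 0 ≤ q ∧ ∀ v, q * B.quad v ≤ A.quad v := by
  have hdisj : Disjoint (Set.Iio 0 ×ˢ Set.Ioi 0) (jointRange A B) := by
    rw [Set.disjoint_left]
    rintro _ ⟨hAv, hBv⟩ ⟨v, rfl⟩
    exact (h v hBv.le).not_gt hAv
  obtain ⟨f, u, hfK, hfW⟩ := geometric_hahn_banach_open ((convex_Iio 0).prod (convex_Ioi 0))
    (isOpen_Iio.prod isOpen_Ioi) (convex_jointRange hA hB) hdisj
  have hu : u ≤ 0 := by simpa using hfW 0 ⟨0, by simp⟩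
  have hfK' : ∀ x ∈ Set.Iic 0 ×ˢ Set.Ici 0, f x ≤ 0 := by
    rw [← closure_Iio, ← closure_Ioi, ← closure_prod_eq]
    exact closure_minimal (fun x hx => ((hfK x hx).trans_le hu).le)
      (isClosed_le f.continuous continuous_const)
  have hfW' : ∀ v, 0 ≤ f (A.quad v, B.quad v) := fun v => by
    by_contra! hneg
    have := hfW _ (smul_mem_jointRange ⟨v, rfl⟩
      (div_nonneg_of_nonpos (by linarith : u - 1 ≤ 0) hneg.le))
    rw [map_smul, smul_eq_mul, div_mul_cancel₀ _ hneg.ne] at this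
    linarith
  have hf := f.apply_eq_fst_mul_add_snd_mul
  set c₁ := f (1, 0)
  set c₂ := f (0, 1)
  have hc₁ : 0 ≤ c₁ := by simpa [hf] using hfK' (-1, 0) ⟨by simp, by simp⟩
  have hc₂ : c₂ ≤ 0 := hfK' (0, 1) ⟨by simp, by simp⟩
  have hc₁' : 0 < c₁ := by
    refine hc₁.lt_of_ne fun h₁ => ?_
    have h₂ : c₂ = 0 := by
      have := hfW' v₀
      rw [hf, ← h₁] at this
      nlinarith
    have := hfK (-1, 1) ⟨by simp, by simp⟩
    rw [hf, ← h₁, h₂] at this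
    linarith
  refine ⟨-c₂ / c₁, div_nonneg (neg_nonneg.2 hc₂) hc₁, fun v => ?_⟩
  have := hfW' v
  rw [hf] at this
  rw [div_mul_eq_mul_div, div_le_iff₀ hc₁']
  linarith

theorem s_lemma (hA : A.IsHermitian) (hB : B.IsHermitian) {v₀ : n → ℂ} (hv₀ : 0 < B.quad v₀) :
    (∀ v, 0 ≤ B.quad v → 0 ≤ A.quad v) ↔ ∃ q : ℝ, 0 ≤ q ∧ (A - (q : ℂ) • B).PosSemidef := by
  have hAqB (q : ℝ) : (A - (q : ℂ) • B).IsHermitian :=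
    hA.sub (hB.smul (by simp [IsSelfAdjoint]))
  simp only [posSemidef_iff_quad_nonneg (hAqB _), quad_sub, ofReal_smul_quad, sub_nonneg]
  refine ⟨exists_nonneg_smul_quad_le_quad hA hB hv₀, ?_⟩
  rintro ⟨q, hq, hle⟩ v hv
  exact (mul_nonneg hq hv).trans (hle v)

end Matrix

section Frobenius

attribute [local instance] Matrix.frobeniusNormedAddCommGroup Matrix.frobeniusNormedSpace

open WithLp

variable {𝕜 m n : Type*} [RCLike 𝕜] [Fintype m] [Fintype n]

theorem frobeniusNorm_eq_norm {N M : ℕ} (Δ : Matrix (Fin N) (Fin M) ℂ) :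
    frobeniusNorm Δ = ‖Δ‖ := by
  rw [frobeniusNorm, frobenius_norm_def, Real.sqrt_eq_rpow]
  simp_rw [Real.rpow_two]

theorem Matrix.frobenius_norm_mulVec_le (A : Matrix m n 𝕜) (x : n → 𝕜) :
    ‖toLp 2 (A *ᵥ x)‖ ≤ ‖A‖ * ‖toLp 2 x‖ := by
  simpa only [← frobenius_norm_replicateCol (ι := Unit), replicateCol_mulVec]
    using frobenius_norm_mul A (replicateCol Unit x)

theorem Matrix.frobenius_norm_vecMulVec_le (x : m → 𝕜) (y : n → 𝕜) :
    ‖vecMulVec x y‖ ≤ ‖toLp 2 x‖ * ‖toLp 2 y‖ := by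
  rw [vecMulVec_eq Unit, ← frobenius_norm_replicateCol (ι := Unit) x,
    ← frobenius_norm_replicateRow (ι := Unit) y]
  exact frobenius_norm_mul _ _

theorem Matrix.exists_mulVec_eq_frobenius_norm_mul_le {x : n → 𝕜} (hx : x ≠ 0) (y : m → 𝕜) :
    ∃ A : Matrix m n 𝕜, A *ᵥ x = y ∧ ‖A‖ * ‖toLp 2 x‖ ≤ ‖toLp 2 y‖ := by
  have hx' : 0 < ‖toLp 2 x‖ := norm_pos_iff.2 (by simpa using hx)
  have hxx : star x ⬝ᵥ x = ((‖toLp 2 x‖ ^ 2 : ℝ) : 𝕜) := by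
    rw [dotProduct_comm, ← EuclideanSpace.inner_toLp_toLp, inner_self_eq_norm_sq_to_K]
    simp
  have hstar : ‖toLp 2 (star x)‖ = ‖toLp 2 x‖ := by simp [EuclideanSpace.norm_eq]
  refine ⟨(((‖toLp 2 x‖ ^ 2)⁻¹ : ℝ) : 𝕜) • vecMulVec y (star x), ?_, ?_⟩
  · have : ((‖toLp 2 x‖ : ℝ) : 𝕜) ≠ 0 := RCLike.ofReal_ne_zero.2 hx'.ne'
    rw [smul_mulVec, vecMulVec_mulVec, hxx]
    ext i
    simp [field]
  · rw [norm_smul, RCLike.norm_ofReal, abs_of_nonneg (by positivity)]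
    calc _ ≤ (‖toLp 2 x‖ ^ 2)⁻¹ * (‖toLp 2 y‖ * ‖toLp 2 x‖) * ‖toLp 2 x‖ := by
          gcongr
          rw [← hstar]
          exact frobenius_norm_vecMulVec_le y (star x)
      _ = ‖toLp 2 y‖ := by field_simp

theorem forall_frobeniusNorm_le_posSemidef_iff {N M : ℕ} {Θ : Matrix (Fin M) (Fin M) ℂ}
    (hΘ : Θ.IsHermitian) (D : Matrix (Fin N) (Fin M) ℂ) (ε d : ℝ) :
    (∀ Δ : Matrix (Fin N) (Fin M) ℂ, frobeniusNorm Δ ≤ ε →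
      ((D + Δ) * Θ * (D + Δ)ᴴ - (d : ℂ) • (1 : Matrix (Fin N) (Fin N) ℂ)).PosSemidef) ↔
    ∀ x y, ‖toLp 2 y‖ ≤ ε * ‖toLp 2 x‖ → d * ‖toLp 2 x‖ ^ 2 ≤ Θ.quad (Dᴴ *ᵥ x + y) := by
  have hherm (Δ : Matrix (Fin N) (Fin M) ℂ) :
      ((D + Δ) * Θ * (D + Δ)ᴴ - (d : ℂ) • (1 : Matrix (Fin N) (Fin N) ℂ)).IsHermitian :=
    (isHermitian_mul_mul_conjTranspose _ hΘ).sub (isHermitian_one.smul (by simp [IsSelfAdjoint]))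
  have hquad (Δ : Matrix (Fin N) (Fin M) ℂ) (x : Fin N → ℂ) :
      ((D + Δ) * Θ * (D + Δ)ᴴ - (d : ℂ) • (1 : Matrix (Fin N) (Fin N) ℂ)).quad x =
        Θ.quad (Dᴴ *ᵥ x + Δᴴ *ᵥ x) - d * ‖toLp 2 x‖ ^ 2 := by
    rw [quad_sub, quad_mul_mul_conjTranspose, ofReal_smul_quad, quad_one, conjTranspose_add,
      add_mulVec]
  simp_rw [posSemidef_iff_quad_nonneg (hherm _), hquad, sub_nonneg, frobeniusNorm_eq_norm]
  constructor
  · intro h x y hxy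
    rcases eq_or_ne x 0 with rfl | hx
    · have : y = 0 := by simpa using hxy
      simp [this]
    obtain ⟨A, rfl, hA⟩ := exists_mulVec_eq_frobenius_norm_mul_le hx y
    have hx' : 0 < ‖toLp 2 x‖ := norm_pos_iff.2 (by simpa using hx)
    simpa using h Aᴴ (by simpa using le_of_mul_le_mul_right (hA.trans hxy) hx') x
  · intro h Δ hΔ x
    refine h x _ ((frobenius_norm_mulVec_le _ x).trans ?_)
    rw [frobenius_norm_conjTranspose]
    gcongr

end Frobenius

namespace Matrix

variable {m n : Type*} [DecidableEq m] [DecidableEq n]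

open WithLp

noncomputable def qmiMatrix [Fintype n] (Θ : Matrix n n ℂ) (D : Matrix m n ℂ) (d : ℝ) :
    Matrix (m ⊕ n) (m ⊕ n) ℂ :=
  fromRows D 1 * Θ * (fromRows D 1)ᴴ - fromBlocks ((d : ℂ) • 1) 0 0 0

variable (m n) in
noncomputable def uncertaintyMatrix (ε : ℝ) : Matrix (m ⊕ n) (m ⊕ n) ℂ :=
  fromBlocks 1 0 0 (((-(ε ^ 2)⁻¹ : ℝ) : ℂ) • 1)

theorem isHermitian_qmiMatrix [Fintype n] {Θ : Matrix n n ℂ} (hΘ : Θ.IsHermitian)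
    (D : Matrix m n ℂ) (d : ℝ) : (qmiMatrix Θ D d).IsHermitian := by
  refine (isHermitian_mul_mul_conjTranspose _ hΘ).sub ?_
  simp [IsHermitian, fromBlocks_conjTranspose]

theorem isHermitian_uncertaintyMatrix (ε : ℝ) : (uncertaintyMatrix m n ε).IsHermitian := by
  simp [IsHermitian, uncertaintyMatrix, fromBlocks_conjTranspose]

theorem quad_qmiMatrix [Fintype m] [Fintype n] (Θ : Matrix n n ℂ) (D : Matrix m n ℂ) (d : ℝ)
    (x : m → ℂ) (y : n → ℂ) :
    (qmiMatrix Θ D d).quad (Sum.elim x y) = Θ.quad (Dᴴ *ᵥ x + y) - d * ‖toLp 2 x‖ ^ 2 := by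
  rw [qmiMatrix, quad_sub, quad_mul_mul_conjTranspose, quad_fromBlocks_zero_zero,
    ofReal_smul_quad, quad_one, conjTranspose_fromRows_eq_fromCols_conjTranspose,
    fromCols_mulVec_sumElim]
  simp [quad]

theorem quad_uncertaintyMatrix_nonneg_iff [Fintype m] [Fintype n] {ε : ℝ} (hε : 0 < ε)
    (x : m → ℂ) (y : n → ℂ) :
    0 ≤ (uncertaintyMatrix m n ε).quad (Sum.elim x y) ↔ ‖toLp 2 y‖ ≤ ε * ‖toLp 2 x‖ := by
  rw [uncertaintyMatrix, quad_fromBlocks_zero_zero, quad_one, ofReal_smul_quad, quad_one,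
    neg_mul, ← sub_eq_add_neg, sub_nonneg, inv_mul_le_iff₀ (by positivity), ← mul_pow,
    pow_le_pow_iff_left₀ (norm_nonneg _) (by positivity) two_ne_zero]

theorem fromBlocks_eq_qmiMatrix_sub_smul [Fintype n] (Θ : Matrix n n ℂ) (D : Matrix m n ℂ)
    (d ε q : ℝ) :
    fromBlocks (D * Θ * Dᴴ - ((q + d : ℝ) : ℂ) • 1) (D * Θ) (Θ * Dᴴ)
        (Θ + ((q / ε ^ 2 : ℝ) : ℂ) • 1) =
      qmiMatrix Θ D d - (q : ℂ) • uncertaintyMatrix m n ε := by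
  rw [qmiMatrix, uncertaintyMatrix, conjTranspose_fromRows_eq_fromCols_conjTranspose,
    fromRows_mul, fromRows_mul_fromCols, fromBlocks_smul]
  simp only [sub_eq_add_neg, fromBlocks_neg, fromBlocks_add]
  congr 1
  · push_cast
    rw [add_smul]
    abel
  · simp
  · simp
  · simp [smul_smul, div_eq_mul_inv]

end Matrix

theorem robust_qmi_iff_lmi_general {N M : ℕ} (hN : 1 ≤ N)
    (Θ : Matrix (Fin M) (Fin M) ℂ) (hΘ : Θ.PosSemidef)
    (Dh : Matrix (Fin N) (Fin M) ℂ) (ε : ℝ) (hε : 0 < ε) (d : ℝ) :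
    (∀ Δ : Matrix (Fin N) (Fin M) ℂ, frobeniusNorm Δ ≤ ε →
      ((Dh + Δ) * Θ * (Dh + Δ)ᴴ - (d : ℂ) • (1 : Matrix (Fin N) (Fin N) ℂ)).PosSemidef) ↔
    (∃ q : ℝ, 0 ≤ q ∧
      (Matrix.fromBlocks
        (Dh * Θ * Dhᴴ - ((q + d : ℝ) : ℂ) • (1 : Matrix (Fin N) (Fin N) ℂ))
        (Dh * Θ)
        (Θ * Dhᴴ)
        (Θ + ((q / ε ^ 2 : ℝ) : ℂ) • (1 : Matrix (Fin M) (Fin M) ℂ))).PosSemidef) := by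
  have hslater : 0 < (uncertaintyMatrix (Fin N) (Fin M) ε).quad (Sum.elim (fun _ => 1) 0) := by
    have : WithLp.toLp 2 (fun _ : Fin N => (1 : ℂ)) ≠ 0 := fun h =>
      one_ne_zero (congrFun (congrArg WithLp.ofLp h) ⟨0, hN⟩)
    simpa [uncertaintyMatrix, quad_fromBlocks_zero_zero, quad_one] using
      pow_pos (norm_pos_iff.2 this) 2
  rw [forall_frobeniusNorm_le_posSemidef_iff hΘ.isHermitian]
  simp_rw [fromBlocks_eq_qmiMatrix_sub_smul, ← s_lemma (isHermitian_qmiMatrix hΘ.isHermitian Dh d)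
    (isHermitian_uncertaintyMatrix ε) hslater]
  refine ⟨fun h v hv => ?_, fun h x y hxy => ?_⟩
  · rw [← Sum.elim_comp_inl_inr v, quad_uncertaintyMatrix_nonneg_iff hε] at hv
    rw [← Sum.elim_comp_inl_inr v, quad_qmiMatrix, sub_nonneg]
    exact h _ _ hv
  · simpa [quad_qmiMatrix] using h _ ((quad_uncertaintyMatrix_nonneg_iff hε x y).2 hxy)

theorem robust_qmi_iff_lmi {N M : ℕ} (hN : 1 ≤ N) (hM : 1 ≤ M)
    (Θ : Matrix (Fin M) (Fin M) ℂ) (hΘ : Θ.PosSemidef)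
    (Dh : Matrix (Fin N) (Fin M) ℂ) (ε : ℝ) (hε : 0 < ε) (d : ℝ) :
    (∀ Δ : Matrix (Fin N) (Fin M) ℂ, frobeniusNorm Δ ≤ ε →
      ((Dh + Δ) * Θ * (Dh + Δ)ᴴ - (d : ℂ) • (1 : Matrix (Fin N) (Fin N) ℂ)).PosSemidef) ↔
    (∃ q : ℝ, 0 ≤ q ∧
      (Matrix.fromBlocks
        (Dh * Θ * Dhᴴ - ((q + d : ℝ) : ℂ) • (1 : Matrix (Fin N) (Fin N) ℂ))
        (Dh * Θ)
        (Θ * Dhᴴ)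
        (Θ + ((q / ε ^ 2 : ℝ) : ℂ) • (1 : Matrix (Fin M) (Fin M) ℂ))).PosSemidef) :=
  robust_qmi_iff_lmi_general hN Θ hΘ Dh ε hε d
end

section
/- Let M ≥ 1, let Θ ∈ ℂ^{M×M} be Hermitian positive semidefinite, let ĝ ∈ ℂ^M, let ε > 0, and let c ≥ 0 be a real number. Then (ĝ + δ)^H Θ (ĝ + δ) ≥ c holds for every δ ∈ ℂ^M with ‖δ‖₂ ≤ ε if and only if there exists a real number q ≥ 0 such that the (M+1)×(M+1) block matrix [[ĝ^H Θ ĝ − q − c, ĝ^H Θ], [Θ ĝ, Θ + (q/ε²)·I_M]] is positive semidefinite. -/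
/-!
Write `f δ = (g + δ)ᴴ Θ (g + δ)`. The quadratic form of the block matrix at `(1, δ)` is
`f δ + (q / ε²) ‖δ‖² - q - c`, and a form with positive semidefinite lower-right block is
nonnegative as soon as it is nonnegative on the affine slice `(1, δ)`. So the LMI says exactly
that `f δ + μ ‖δ‖² ≥ c + μ ε²` for all `δ`, with `μ = q / ε²`, which trivially implies the
robust inequality on the ball. Conversely (the convex S-lemma), let `δ₀` minimize `f` on the
ball. First-order optimality makes `δ₀` minimize the linear form `⟪Θ(g + δ₀), ·⟫` on the ball,
and the equality case of Cauchy–Schwarz gives `Θ(g + δ₀) = -μ δ₀` with `μ ≥ 0` and either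
`μ = 0` or `‖δ₀‖ = ε`. Then `δ₀` is a stationary point of the convex function
`f + μ ‖·‖²`, hence its global minimum, and that minimum is `f δ₀ + μ ε² ≥ c + μ ε²`.
-/

open scoped RealInnerProductSpace ComplexOrder
open Metric Matrix

section InnerProductSpace
variable {E : Type*} [NormedAddCommGroup E] [InnerProductSpace ℝ E] {T : E →ₗ[ℝ] E}

theorem LinearMap.IsSymmetric.inner_map_add_add (hT : T.IsSymmetric) (x y : E) :
    ⟪T (x + y), x + y⟫ = ⟪T x, x⟫ + 2 * ⟪T x, y⟫ + ⟪T y, y⟫ := by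
  rw [map_add, inner_add_left, inner_add_right, inner_add_right, hT y x, real_inner_comm (T x) y]
  ring

theorem LinearMap.IsSymmetric.inner_map_sub_nonneg_of_isMinOn [FiniteDimensional ℝ E]
    (hT : T.IsSymmetric) {s : Set E} (hs : Convex ℝ s) {g a b : E}
    (hmin : IsMinOn (fun x => ⟪T (g + x), g + x⟫) s a) (ha : a ∈ s) (hb : b ∈ s) :
    0 ≤ ⟪T (g + a), b - a⟫ := by
  let T' := LinearMap.toContinuousLinearMap T
  have hg : HasFDerivAt (fun x => g + x) (ContinuousLinearMap.id ℝ E) a :=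
    (hasFDerivAt_id a).const_add g
  have hderiv := ((T'.hasFDerivAt.comp a hg).inner ℝ hg).hasFDerivWithinAt (s := s)
  have := hmin.localize.hasFDerivWithinAt_nonneg hderiv
    (sub_mem_posTangentConeAt_of_segment_subset (hs.segment_subset ha hb))
  simp only [ContinuousLinearMap.comp_apply, ContinuousLinearMap.prod_apply, fderivInnerCLM_apply,
    ContinuousLinearMap.id_apply, Function.comp_apply, T', LinearMap.coe_toContinuousLinearMap',
    hT (b - a), real_inner_comm (T (g + a))] at this
  linarith

theorem exists_nonneg_eq_neg_smul_of_forall_inner_le {w a : E} {ε : ℝ} (hε : 0 < ε)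
    (ha : ‖a‖ ≤ ε) (hmin : ∀ b, ‖b‖ ≤ ε → ⟪w, a⟫ ≤ ⟪w, b⟫) :
    ∃ μ : ℝ, 0 ≤ μ ∧ w = -μ • a ∧ (μ = 0 ∨ ‖a‖ = ε) := by
  rcases eq_or_ne w 0 with rfl | hw
  · exact ⟨0, le_rfl, by simp, Or.inl rfl⟩
  have hw_pos : 0 < ‖w‖ := norm_pos_iff.2 hw
  have hle : ⟪w, a⟫ ≤ -(ε * ‖w‖) := by
    have := hmin (-(ε / ‖w‖) • w) (by
      rw [norm_smul, norm_neg, Real.norm_of_nonneg (by positivity), div_mul_cancel₀ _ hw_pos.ne'])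
    rw [real_inner_smul_right, real_inner_self_eq_norm_sq] at this
    convert this using 1
    field_simp
  have hcauchy : -(‖w‖ * ‖a‖) ≤ ⟪w, a⟫ := neg_le_of_abs_le (abs_real_inner_le_norm w a)
  have hna : ‖a‖ = ε := le_antisymm ha (le_of_mul_le_mul_left (by linarith) hw_pos)
  rw [hna] at hcauchy
  have heq : ⟪w, -a⟫ = ‖w‖ * ‖-a‖ := by rw [inner_neg_right, norm_neg, hna]; linarith
  rw [inner_eq_norm_mul_iff_real, norm_neg, hna] at heq
  refine ⟨‖w‖ / ε, by positivity, ?_, Or.inr hna⟩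
  calc w = ε⁻¹ • (ε • w) := (inv_smul_smul₀ hε.ne' w).symm
    _ = -(‖w‖ / ε) • a := by rw [heq]; module

theorem LinearMap.IsPositive.exists_multiplier_of_forall_norm_le [FiniteDimensional ℝ E]
    (hT : T.IsPositive) (g : E) {ε c : ℝ} (hε : 0 < ε)
    (h : ∀ δ, ‖δ‖ ≤ ε → c ≤ ⟪T (g + δ), g + δ⟫) :
    ∃ μ : ℝ, 0 ≤ μ ∧ ∀ δ, c + μ * ε ^ 2 ≤ ⟪T (g + δ), g + δ⟫ + μ * ‖δ‖ ^ 2 := by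
  have hcont : Continuous fun δ => ⟪T (g + δ), g + δ⟫ := by
    have := T.continuous_of_finiteDimensional
    fun_prop
  obtain ⟨δ₀, hδ₀, hmin⟩ := (isCompact_closedBall (0 : E) ε).exists_isMinOn
    (nonempty_closedBall.2 hε.le) hcont.continuousOn
  obtain ⟨μ, hμ, hw, hslack⟩ := exists_nonneg_eq_neg_smul_of_forall_inner_le hε
    (mem_closedBall_zero_iff.1 hδ₀) fun b hb => by
      have := hT.isSymmetric.inner_map_sub_nonneg_of_isMinOn (convex_closedBall 0 ε) hmin hδ₀
        (mem_closedBall_zero_iff.2 hb)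
      rw [inner_sub_right] at this
      linarith
  refine ⟨μ, hμ, fun δ => ?_⟩
  have hf := hT.isSymmetric.inner_map_add_add (g + δ₀) (δ - δ₀)
  rw [add_add_sub_cancel] at hf
  have hcross : ⟪T (g + δ₀), δ - δ₀⟫ = -μ * ⟪δ₀, δ - δ₀⟫ := by rw [hw, real_inner_smul_left]
  have hn : ‖δ‖ ^ 2 = ‖δ₀‖ ^ 2 + 2 * ⟪δ₀, δ - δ₀⟫ + ‖δ - δ₀‖ ^ 2 := by
    rw [← norm_add_sq_real, add_sub_cancel]
  have hslack' : μ * ‖δ₀‖ ^ 2 = μ * ε ^ 2 := by rcases hslack with rfl | hna <;> simp [*]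
  have hc := h δ₀ (mem_closedBall_zero_iff.1 hδ₀)
  nlinarith [hT.inner_nonneg_left (δ - δ₀), mul_nonneg hμ (sq_nonneg ‖δ - δ₀‖)]
end InnerProductSpace

theorem EuclideanSpace.real_inner_eq_re_inner {𝕜 : Type*} [RCLike 𝕜] {n : Type*} [Fintype n]
    (x y : EuclideanSpace 𝕜 n) : inner ℝ x y = RCLike.re (inner 𝕜 x y) := by
  simp only [PiLp.inner_apply, map_sum]
  rfl

namespace Matrix

section CommRing
variable {R : Type*} [CommRing R] [StarRing R] {n : Type*} [Fintype n] [DecidableEq n]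

def robustLMI (Θ : Matrix n n R) (g : n → R) (a μ : R) : Matrix (Fin 1 ⊕ n) (Fin 1 ⊕ n) R :=
  fromBlocks (of fun _ _ => star g ⬝ᵥ (Θ *ᵥ g) - a) (replicateRow (Fin 1) (star g ᵥ* Θ))
    (replicateCol (Fin 1) (Θ *ᵥ g)) (Θ + μ • 1)

theorem star_sumElim_one_dotProduct_robustLMI_mulVec (Θ : Matrix n n R) (g δ : n → R) (a μ : R) :
    star (Sum.elim 1 δ) ⬝ᵥ (robustLMI Θ g a μ *ᵥ Sum.elim 1 δ) =
      star (g + δ) ⬝ᵥ (Θ *ᵥ (g + δ)) + μ * (star δ ⬝ᵥ δ) - a := by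
  have hA : (of fun _ _ => star g ⬝ᵥ (Θ *ᵥ g) - a : Matrix (Fin 1) (Fin 1) R) *ᵥ 1 =
      fun _ => star g ⬝ᵥ (Θ *ᵥ g) - a := by
    ext; simp [mulVec, dotProduct]
  have hC : replicateCol (Fin 1) (Θ *ᵥ g) *ᵥ 1 = Θ *ᵥ g := by
    ext; simp [mulVec, dotProduct]
  have h1 (v : Fin 1 → R) : star 1 ⬝ᵥ v = v 0 := by simp [dotProduct]
  simp only [robustLMI, Function.star_sumElim, fromBlocks_mulVec, sumElim_dotProduct_sumElim,
    Sum.elim_comp_inl, Sum.elim_comp_inr, hA, hC, replicateRow_mulVec_eq_const, add_mulVec,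
    smul_mulVec, one_mulVec, h1, Pi.add_apply, Function.const_apply, ← dotProduct_mulVec, star_add,
    add_dotProduct, dotProduct_add, mulVec_add, dotProduct_smul, smul_eq_mul]
  ring

theorem IsHermitian.robustLMI {Θ : Matrix n n R} (hΘ : Θ.IsHermitian) (g : n → R) {a μ : R}
    (ha : IsSelfAdjoint a) (hμ : IsSelfAdjoint μ) : (robustLMI Θ g a μ).IsHermitian := by
  have hrow : star (star g ᵥ* Θ) = Θ *ᵥ g := by rw [star_vecMul, hΘ.eq, star_star]
  have hcorner : star (star g ⬝ᵥ (Θ *ᵥ g)) = star g ⬝ᵥ (Θ *ᵥ g) := by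
    rw [← star_dotProduct_star, star_mulVec, star_star, ← dotProduct_mulVec, hΘ.eq]
  rw [Matrix.robustLMI, isHermitian_fromBlocks_iff]
  refine ⟨?_, by rw [conjTranspose_replicateRow, hrow],
    by rw [conjTranspose_replicateCol, ← hrow, star_star], hΘ.add (isHermitian_one.smul hμ)⟩
  ext
  simp only [conjTranspose_apply, of_apply, star_sub, hcorner, ha.star_eq]

end CommRing

variable {𝕜 : Type*} [RCLike 𝕜] {n : Type*} [Fintype n]

theorem star_dotProduct_self_eq_norm_sq (x : n → 𝕜) :
    star x ⬝ᵥ x = ((‖WithLp.toLp 2 x‖ ^ 2 : ℝ) : 𝕜) := by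
  rw [dotProduct_comm, ← EuclideanSpace.inner_toLp_toLp, inner_self_eq_norm_sq_to_K]
  push_cast
  rfl

theorem IsHermitian.ofReal_re_star_dotProduct_mulVec_self {Θ : Matrix n n 𝕜}
    (hΘ : Θ.IsHermitian) (x : n → 𝕜) :
    ((RCLike.re (star x ⬝ᵥ (Θ *ᵥ x)) : ℝ) : 𝕜) = star x ⬝ᵥ (Θ *ᵥ x) :=
  RCLike.conj_eq_iff_re.1 (RCLike.conj_eq_iff_im.2 (hΘ.im_star_dotProduct_mulVec_self x))

theorem posSemidef_fromBlocks_of_forall_nonneg {A : Matrix (Fin 1) (Fin 1) 𝕜}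
    {B : Matrix (Fin 1) n 𝕜} {C : Matrix n (Fin 1) 𝕜} {D : Matrix n n 𝕜}
    (hM : (fromBlocks A B C D).IsHermitian) (hD : D.PosSemidef)
    (h : ∀ x, 0 ≤ star (Sum.elim 1 x) ⬝ᵥ (fromBlocks A B C D *ᵥ Sum.elim 1 x)) :
    (fromBlocks A B C D).PosSemidef := by
  refine .of_dotProduct_mulVec_nonneg hM fun y => ?_
  obtain ⟨t, x, rfl⟩ : ∃ (t : 𝕜) (x : n → 𝕜), y = Sum.elim (t • 1) x := ⟨y (.inl 0), y ∘ .inr, by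
    ext (i | i)
    · simp [Fin.fin_one_eq_zero i]
    · rfl⟩
  rcases eq_or_ne t 0 with rfl | ht
  · simpa [Function.star_sumElim, fromBlocks_mulVec, sumElim_dotProduct_sumElim] using
      hD.dotProduct_mulVec_nonneg x
  · have hy : Sum.elim (t • 1) x = t • Sum.elim (1 : Fin 1 → 𝕜) (t⁻¹ • x) := by
      ext (i | i) <;> simp [ht]
    rw [hy, star_smul, mulVec_smul, smul_dotProduct, dotProduct_smul, smul_smul]
    exact mul_nonneg (star_mul_self_nonneg t) (h _)

variable [DecidableEq n]

theorem PosSemidef.exists_multiplier_of_forall_norm_le {Θ : Matrix n n 𝕜} (hΘ : Θ.PosSemidef)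
    (g : n → 𝕜) {ε c : ℝ} (hε : 0 < ε)
    (h : ∀ δ : n → 𝕜, ‖WithLp.toLp 2 δ‖ ≤ ε → c ≤ RCLike.re (star (g + δ) ⬝ᵥ (Θ *ᵥ (g + δ)))) :
    ∃ μ : ℝ, 0 ≤ μ ∧ ∀ δ : n → 𝕜,
      c + μ * ε ^ 2 ≤ RCLike.re (star (g + δ) ⬝ᵥ (Θ *ᵥ (g + δ))) + μ * ‖WithLp.toLp 2 δ‖ ^ 2 := by
  let T := (toEuclideanLin Θ).restrictScalars ℝ
  have hre (x : EuclideanSpace 𝕜 n) : ⟪T x, x⟫ = RCLike.re (star x.ofLp ⬝ᵥ (Θ *ᵥ x.ofLp)) := by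
    rw [EuclideanSpace.real_inner_eq_re_inner, inner_re_symm,
      EuclideanSpace.inner_eq_star_dotProduct, dotProduct_comm]
    rfl
  have hT : T.IsPositive := by
    refine ⟨fun x y => ?_, fun x => ?_⟩
    · simp only [EuclideanSpace.real_inner_eq_re_inner]
      exact congrArg _ ((isSymmetric_toEuclideanLin_iff.2 hΘ.1) x y)
    · rw [RCLike.re_to_real, hre]
      exact (RCLike.nonneg_iff.1 (hΘ.dotProduct_mulVec_nonneg _)).1
  obtain ⟨μ, hμ, hμδ⟩ := hT.exists_multiplier_of_forall_norm_le (WithLp.toLp 2 g) hε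
    fun δ hδ => by rw [hre]; exact h δ.ofLp hδ
  exact ⟨μ, hμ, fun δ => by
    simpa only [hre, WithLp.ofLp_add, WithLp.ofLp_toLp] using hμδ (WithLp.toLp 2 δ)⟩

theorem posSemidef_robustLMI_iff {Θ : Matrix n n 𝕜} (hΘ : Θ.PosSemidef) (g : n → 𝕜)
    {a μ : ℝ} (hμ : 0 ≤ μ) :
    (robustLMI Θ g a μ).PosSemidef ↔
      ∀ δ : n → 𝕜, a ≤ RCLike.re (star (g + δ) ⬝ᵥ (Θ *ᵥ (g + δ))) + μ * ‖WithLp.toLp 2 δ‖ ^ 2 := by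
  have hform (δ : n → 𝕜) : star (Sum.elim 1 δ) ⬝ᵥ (robustLMI Θ g a μ *ᵥ Sum.elim 1 δ) =
      ((RCLike.re (star (g + δ) ⬝ᵥ (Θ *ᵥ (g + δ))) + μ * ‖WithLp.toLp 2 δ‖ ^ 2 - a : ℝ) : 𝕜) := by
    rw [star_sumElim_one_dotProduct_robustLMI_mulVec, star_dotProduct_self_eq_norm_sq,
      ← hΘ.1.ofReal_re_star_dotProduct_mulVec_self]
    push_cast
    rfl
  constructor
  · intro hP δ
    have := hP.dotProduct_mulVec_nonneg (Sum.elim 1 δ)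
    rw [hform, RCLike.ofReal_nonneg] at this
    linarith
  · intro h
    have hnonneg (δ : n → 𝕜) : 0 ≤ star (Sum.elim 1 δ) ⬝ᵥ (robustLMI Θ g a μ *ᵥ Sum.elim 1 δ) := by
      rw [hform, RCLike.ofReal_nonneg]
      linarith [h δ]
    exact posSemidef_fromBlocks_of_forall_nonneg
      (hΘ.1.robustLMI g (RCLike.conj_ofReal a) (RCLike.conj_ofReal μ))
      (hΘ.add (PosSemidef.one.smul (RCLike.ofReal_nonneg.2 hμ))) hnonneg

end Matrix

theorem robust_vector_qi_iff_lmi_general {M : ℕ}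
    (Θ : Matrix (Fin M) (Fin M) ℂ) (hΘ : Θ.PosSemidef)
    (g : Fin M → ℂ) (ε : ℝ) (hε : 0 < ε) (c : ℝ) :
    (∀ δ : Fin M → ℂ, Real.sqrt (∑ i, ‖δ i‖ ^ 2) ≤ ε →
      (c : ℂ) ≤ star (g + δ) ⬝ᵥ (Θ *ᵥ (g + δ))) ↔
    (∃ q : ℝ, 0 ≤ q ∧
      (Matrix.fromBlocks
        (Matrix.of fun (_ : Fin 1) (_ : Fin 1) => star g ⬝ᵥ (Θ *ᵥ g) - (q : ℂ) - (c : ℂ))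
        (Matrix.of fun (_ : Fin 1) (j : Fin M) => Matrix.vecMul (star g) Θ j)
        (Matrix.of fun (i : Fin M) (_ : Fin 1) => (Θ *ᵥ g) i)
        (Θ + ((q / ε ^ 2 : ℝ) : ℂ) • (1 : Matrix (Fin M) (Fin M) ℂ))).PosSemidef) := by
  have hball (δ : Fin M → ℂ) : √(∑ i, ‖δ i‖ ^ 2) = ‖WithLp.toLp 2 δ‖ :=
    (EuclideanSpace.norm_eq _).symm
  have hle (δ : Fin M → ℂ) : (c : ℂ) ≤ star (g + δ) ⬝ᵥ (Θ *ᵥ (g + δ)) ↔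
      c ≤ RCLike.re (star (g + δ) ⬝ᵥ (Θ *ᵥ (g + δ))) := by
    rw [← hΘ.1.ofReal_re_star_dotProduct_mulVec_self]
    exact RCLike.ofReal_le_ofReal
  simp_rw [hball, hle, sub_sub, ← Complex.ofReal_add]
  -- Casts as in the `RCLike` lemmas; matching them up to defeq would unfold real arithmetic.
  rw [← RCLike.ofReal_eq_complex_ofReal]
  constructor
  · intro h
    obtain ⟨μ, hμ, hμδ⟩ := hΘ.exists_multiplier_of_forall_norm_le g hε h
    refine ⟨μ * ε ^ 2, by positivity, ?_⟩
    rw [mul_div_cancel_right₀ μ (by positivity)]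
    exact (posSemidef_robustLMI_iff (a := μ * ε ^ 2 + c) hΘ g hμ).2 fun δ => by
      linarith [hμδ δ]
  · rintro ⟨q, hq, hP⟩ δ hδ
    have hqδ := (posSemidef_robustLMI_iff (a := q + c) hΘ g (by positivity)).1 hP δ
    have hpenalty : q / ε ^ 2 * ‖WithLp.toLp 2 δ‖ ^ 2 ≤ q :=
      calc q / ε ^ 2 * ‖WithLp.toLp 2 δ‖ ^ 2 ≤ q / ε ^ 2 * ε ^ 2 := by gcongr
        _ = q := div_mul_cancel₀ q (by positivity)
    linarith

theorem robust_vector_qi_iff_lmi {M : ℕ} (hM : 1 ≤ M)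
    (Θ : Matrix (Fin M) (Fin M) ℂ) (hΘ : Θ.PosSemidef)
    (g : Fin M → ℂ) (ε : ℝ) (hε : 0 < ε) (c : ℝ) (hc : 0 ≤ c) :
    (∀ δ : Fin M → ℂ, Real.sqrt (∑ i, ‖δ i‖ ^ 2) ≤ ε →
      (c : ℂ) ≤ star (g + δ) ⬝ᵥ (Θ *ᵥ (g + δ))) ↔
    (∃ q : ℝ, 0 ≤ q ∧
      (Matrix.fromBlocks
        (Matrix.of fun (_ : Fin 1) (_ : Fin 1) => star g ⬝ᵥ (Θ *ᵥ g) - (q : ℂ) - (c : ℂ))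
        (Matrix.of fun (_ : Fin 1) (j : Fin M) => Matrix.vecMul (star g) Θ j)
        (Matrix.of fun (i : Fin M) (_ : Fin 1) => (Θ *ᵥ g) i)
        (Θ + ((q / ε ^ 2 : ℝ) : ℂ) • (1 : Matrix (Fin M) (Fin M) ℂ))).PosSemidef) :=
  robust_vector_qi_iff_lmi_general Θ hΘ g ε hε c
end

section
/- Let n ≥ 1 and let Σ and Γ be Hermitian positive definite n×n complex matrices. Set C = Σ + Γ, E = (Σ⁻¹ + Γ⁻¹)⁻¹, and for s, t ∈ ℂ^n set e = E(Σ⁻¹ s + Γ⁻¹ t). Then for all r, s, t ∈ ℂ^n the complex Gaussian densities satisfy the pointwise identity CN_Σ(r − s) · CN_Γ(r − t) = CN_E(r − e) · CN_C(s − t). -/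
open Matrix
open scoped ComplexOrder

private lemma quad_aux {n : ℕ} (A B E M : Matrix (Fin n) (Fin n) ℂ)
    (hA : Aᴴ = A) (hB : Bᴴ = B) (hE : Eᴴ = E)
    (hEab : E * (A+B) = 1)
    (hAEB : A * E * B = M) (hBEA : B * E * A = M)
    (hAEA : A * E * A = A - M) (hBEB : B * E * B = B - M)
    (r s t : Fin n → ℂ) :
    star (r-s) ⬝ᵥ (A *ᵥ (r-s)) + star (r-t) ⬝ᵥ (B *ᵥ (r-t)) =
      star (r - E *ᵥ (A *ᵥ s + B *ᵥ t)) ⬝ᵥ ((A+B) *ᵥ (r - E *ᵥ (A *ᵥ s + B *ᵥ t)))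
        + star (s-t) ⬝ᵥ (M *ᵥ (s-t)) := by
  simp only [star_sub, star_add, mulVec_sub, mulVec_add, mulVec_mulVec,
    dotProduct_sub, dotProduct_add, sub_dotProduct, add_dotProduct,
    dotProduct_mulVec, vecMul_vecMul, star_mulVec, conjTranspose_mul, hA, hB, hE,
    Matrix.sub_vecMul, Matrix.add_vecMul, Matrix.vecMul_add, Matrix.vecMul_sub,
    ← Matrix.mul_assoc, add_mul, mul_add, hAEB, hBEA, hAEA, hBEB, hEab,
    Matrix.vecMul_one]
  ring

/-- The complex Gaussian density with (Hermitian positive definite) covariance matrix `A`: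
`CN_A(x) = (π^n · det A)⁻¹ · exp(−xᴴ A⁻¹ x)`. -/
noncomputable def CN {n : ℕ} (A : Matrix (Fin n) (Fin n) ℂ) (x : Fin n → ℂ) : ℝ :=
  (Real.pi ^ n * A.det.re)⁻¹ * Real.exp (-(star x ⬝ᵥ (A⁻¹ *ᵥ x)).re)

theorem complex_gaussian_product_identity {n : ℕ} (hn : 1 ≤ n)
    (S G : Matrix (Fin n) (Fin n) ℂ) (hS : S.PosDef) (hG : G.PosDef)
    (r s t : Fin n → ℂ) :
    CN S (r - s) * CN G (r - t) =
      CN ((S⁻¹ + G⁻¹)⁻¹) (r - (S⁻¹ + G⁻¹)⁻¹ *ᵥ (S⁻¹ *ᵥ s + G⁻¹ *ᵥ t)) *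
        CN (S + G) (s - t) := by
  have hdS : IsUnit S.det := (Matrix.isUnit_iff_isUnit_det S).mp hS.isUnit
  have hdG : IsUnit G.det := (Matrix.isUnit_iff_isUnit_det G).mp hG.isUnit
  have hAB : (S⁻¹ + G⁻¹).PosDef := hS.inv.add hG.inv
  have hC : (S + G).PosDef := hS.add hG
  have hE : ((S⁻¹ + G⁻¹)⁻¹).PosDef := hAB.inv
  have hdAB : IsUnit (S⁻¹ + G⁻¹).det := (Matrix.isUnit_iff_isUnit_det _).mp hAB.isUnit
  have hEab : (S⁻¹+G⁻¹)⁻¹ * (S⁻¹+G⁻¹) = 1 := nonsing_inv_mul _ hdAB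
  have hfac1 : S + G = G * (S⁻¹ + G⁻¹) * S := by
    rw [Matrix.mul_add, Matrix.add_mul, Matrix.mul_assoc G S⁻¹ S, nonsing_inv_mul S hdS,
      mul_nonsing_inv G hdG, Matrix.mul_one, Matrix.one_mul, add_comm]
  have hfac2 : S + G = S * (S⁻¹ + G⁻¹) * G := by
    rw [Matrix.mul_add, Matrix.add_mul, Matrix.mul_assoc S G⁻¹ G, nonsing_inv_mul G hdG,
      mul_nonsing_inv S hdS, Matrix.mul_one, Matrix.one_mul, add_comm]
  have hM1 : S⁻¹ * (S⁻¹+G⁻¹)⁻¹ * G⁻¹ = (S+G)⁻¹ := by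
    rw [hfac1, Matrix.mul_inv_rev, Matrix.mul_inv_rev, Matrix.mul_assoc]
  have hM2 : G⁻¹ * (S⁻¹+G⁻¹)⁻¹ * S⁻¹ = (S+G)⁻¹ := by
    rw [hfac2, Matrix.mul_inv_rev, Matrix.mul_inv_rev, Matrix.mul_assoc]
  have hAEA : S⁻¹ * (S⁻¹+G⁻¹)⁻¹ * S⁻¹ = S⁻¹ - (S+G)⁻¹ := by
    rw [eq_sub_iff_add_eq, ← hM1, ← Matrix.mul_add, Matrix.mul_assoc, hEab, Matrix.mul_one]
  have hBEB : G⁻¹ * (S⁻¹+G⁻¹)⁻¹ * G⁻¹ = G⁻¹ - (S+G)⁻¹ := by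
    have h1 : (S⁻¹+G⁻¹)⁻¹ * (G⁻¹ + S⁻¹) = 1 := by rw [add_comm G⁻¹ S⁻¹]; exact hEab
    rw [eq_sub_iff_add_eq, ← hM2, ← Matrix.mul_add, Matrix.mul_assoc, h1, Matrix.mul_one]
  -- determinant identity
  have hdet : ((S⁻¹+G⁻¹)⁻¹).det * (S+G).det = S.det * G.det := by
    rw [Matrix.det_nonsing_inv, hfac1, Matrix.det_mul, Matrix.det_mul, Ring.inverse_eq_inv',
      show G.det * (S⁻¹+G⁻¹).det * S.det = (S⁻¹+G⁻¹).det * (S.det * G.det) by ring,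
      ← mul_assoc, inv_mul_cancel₀ hdAB.ne_zero, one_mul]
  -- imaginary parts of determinants vanish, real parts are the whole story
  have him : ∀ (A : Matrix (Fin n) (Fin n) ℂ), A.PosDef → A.det.im = 0 := by
    intro A hA
    have := hA.det_pos
    rw [Complex.lt_def] at this
    exact this.2.symm
  have hdetre : S.det.re * G.det.re = ((S⁻¹+G⁻¹)⁻¹).det.re * (S+G).det.re := by
    have h1 : (S.det * G.det).re = S.det.re * G.det.re := by
      rw [Complex.mul_re, him S hS, him G hG]; ring
    have h2 : (((S⁻¹+G⁻¹)⁻¹).det * (S+G).det).re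
        = ((S⁻¹+G⁻¹)⁻¹).det.re * (S+G).det.re := by
      rw [Complex.mul_re, him _ hE, him _ hC]; ring
    rw [← h1, ← h2, hdet]
  -- quadratic form identity
  have hq := quad_aux S⁻¹ G⁻¹ (S⁻¹+G⁻¹)⁻¹ (S+G)⁻¹
    hS.inv.isHermitian.eq hG.inv.isHermitian.eq hE.isHermitian.eq hEab
    hM1 hM2 hAEA hBEB r s t
  -- assemble
  unfold CN
  rw [nonsing_inv_nonsing_inv _ hdAB]
  rw [mul_mul_mul_comm, mul_mul_mul_comm ((Real.pi ^ n * ((S⁻¹+G⁻¹)⁻¹).det.re)⁻¹),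
    ← mul_inv, ← mul_inv, ← Real.exp_add, ← Real.exp_add, ← neg_add, ← neg_add,
    ← Complex.add_re, ← Complex.add_re, hq]
  congr 2
  rw [mul_mul_mul_comm, hdetre, ← mul_mul_mul_comm]
end
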